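/- Let α be a real number and let 𝔮 : (0,∞) → ℝ be twice differentiable with 𝔮(τ)² ≠ 1 for all τ > 0, satisfying the second-order ODE τ(𝔮² − 1)(τ𝔮')' = 𝔮(τ𝔮')² + (1/4)(τ − α²)𝔮 + (1/4)τ𝔮³(𝔮² − 2) on (0,∞), where ' = d/dτ. Define 𝔭(τ) = 2τ𝔮'(τ)/(𝔮(τ)² − 1) and the Hamiltonian H(τ) = (𝔮(τ)² − 1)𝔭(τ)²/(4τ) − α²𝔮(τ)²/(4τ(𝔮(τ)² − 1)) − 𝔮(τ)²/4. Then for all τ > 0, d/dτ( −τ H(τ) ) = 𝔮(τ)²/4. -/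

import Mathlib

/-!
With `w = τ 𝔮'` one has `𝔭 = 2w/(𝔮² - 1)`, so `-τ H = -w²/(𝔮² - 1) + α²𝔮²/(4(𝔮² - 1)) + τ𝔮²/4`.
Differentiating and eliminating `w'` by the ODE `τ(𝔮² - 1) w' = 𝔮w² + (τ - α²)𝔮/4 + τ𝔮³(𝔮² - 2)/4`,
the terms in `w²` and in `α²` cancel, and the rest collapses to `𝔮²/4` because
`(𝔮² - 1)² = 𝔮²(𝔮² - 2) + 1`.
-/

open Topology

lemma neg_mul_hamiltonian_eq (α t q q' : ℝ) (ht : t ≠ 0) (hD : q ^ 2 - 1 ≠ 0) :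
    -(t * ((q ^ 2 - 1) * (2 * t * q' / (q ^ 2 - 1)) ^ 2 / (4 * t)
        - α ^ 2 * q ^ 2 / (4 * t * (q ^ 2 - 1)) - q ^ 2 / 4)) =
      -(t * q') ^ 2 / (q ^ 2 - 1) + α ^ 2 * q ^ 2 / (4 * (q ^ 2 - 1)) + t * q ^ 2 / 4 := by
  field_simp
  ring

lemma hasDerivAt_neg_mul_hamiltonian_of_ode {q w : ℝ → ℝ} {q' w' τ : ℝ} (α : ℝ)
    (hq : HasDerivAt q q' τ) (hw : HasDerivAt w w' τ) (hwτ : w τ = τ * q')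
    (hD : q τ ^ 2 - 1 ≠ 0)
    (hode : τ * (q τ ^ 2 - 1) * w' =
      q τ * w τ ^ 2 + (1 / 4) * (τ - α ^ 2) * q τ + (1 / 4) * τ * q τ ^ 3 * (q τ ^ 2 - 2)) :
    HasDerivAt (fun t => -w t ^ 2 / (q t ^ 2 - 1) + α ^ 2 * q t ^ 2 / (4 * (q t ^ 2 - 1))
      + t * q t ^ 2 / 4) (q τ ^ 2 / 4) τ := by
  have hD' : HasDerivAt (fun t => q t ^ 2 - 1) (2 * q τ * q') τ := by
    simpa using (hq.pow 2).sub_const 1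
  have hD4 : 4 * (q τ ^ 2 - 1) ≠ 0 := mul_ne_zero four_ne_zero hD
  have hderiv := (((hw.pow 2).neg.div hD' hD).add
    (((hq.pow 2).const_mul (α ^ 2)).div (hD'.const_mul 4) hD4)).add
    (((hasDerivAt_id τ).mul (hq.pow 2)).div_const 4)
  refine hderiv.congr_deriv ?_
  simp only [Pi.neg_apply, Pi.pow_apply, id_eq]
  rw [hwτ] at hode ⊢
  field_simp
  linear_combination (-8 * q') * hode

theorem tracy_widom_hamiltonian_derivative (α : ℝ) (q : ℝ → ℝ)
    (hq : ∀ τ ∈ Set.Ioi (0 : ℝ), DifferentiableAt ℝ q τ)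
    (hq' : ∀ τ ∈ Set.Ioi (0 : ℝ), DifferentiableAt ℝ (deriv q) τ)
    (hne : ∀ τ ∈ Set.Ioi (0 : ℝ), q τ ^ 2 ≠ 1)
    (hode : ∀ τ ∈ Set.Ioi (0 : ℝ),
      τ * (q τ ^ 2 - 1) * deriv (fun t => t * deriv q t) τ =
        q τ * (τ * deriv q τ) ^ 2 + (1 / 4) * (τ - α ^ 2) * q τ
          + (1 / 4) * τ * q τ ^ 3 * (q τ ^ 2 - 2)) :
    ∀ τ ∈ Set.Ioi (0 : ℝ),
      deriv (fun t =>
        -(t * ((q t ^ 2 - 1) * (2 * t * deriv q t / (q t ^ 2 - 1)) ^ 2 / (4 * t)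
          - α ^ 2 * q t ^ 2 / (4 * t * (q t ^ 2 - 1)) - q t ^ 2 / 4))) τ
        = q τ ^ 2 / 4 := by
  intro τ hτ
  have hD : q τ ^ 2 - 1 ≠ 0 := sub_ne_zero.mpr (hne τ hτ)
  have hw : DifferentiableAt ℝ (fun t => t * deriv q t) τ := differentiableAt_id.mul (hq' τ hτ)
  have hlocal : ∀ᶠ t in 𝓝 τ, t ≠ 0 ∧ q t ^ 2 - 1 ≠ 0 :=
    (eventually_ne_nhds (ne_of_gt hτ)).and
      (((hq τ hτ).continuousAt.pow 2).sub continuousAt_const |>.eventually_ne hD)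
  refine HasDerivAt.deriv ((hasDerivAt_neg_mul_hamiltonian_of_ode α (hq τ hτ).hasDerivAt
    hw.hasDerivAt rfl hD (hode τ hτ)).congr_of_eventuallyEq ?_)
  exact hlocal.mono fun t ⟨ht, hDt⟩ => neg_mul_hamiltonian_eq α t (q t) (deriv q t) ht hDt
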